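/- Let n, d, d' be positive integers and λ > 0. For each i = 1,…,n let h_i ∈ ℝ^d and let ℓ_i : ℝ^{d'} → ℝ be differentiable. Define L_λ(W) = (1/n)·Σ_{i=1}^n ℓ_i(W h_i) + (λ/2)·‖W‖_F² for W ∈ ℝ^{d'×d}, and define the bFACT matrix B := −(1/(nλ))·Σ_{i=1}^n (W h_i)(∇ℓ_i(W h_i))^⊤ ∈ ℝ^{d'×d'}. If W is a critical point of L_λ, then (W W^⊤)² = B·B^⊤; consequently, W W^⊤ is the unique positive semidefinite square root of B·B^⊤, i.e. W W^⊤ = √(B·B^⊤). -/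

import Mathlib

open Matrix

attribute [local instance] Matrix.frobeniusSeminormedAddCommGroup
  Matrix.frobeniusNormedAddCommGroup Matrix.frobeniusNormedSpace

/-- The gradient of a function `f : ℝ^k → ℝ`, as a plain vector `Fin k → ℝ`. -/
noncomputable def grad {k : ℕ} (f : EuclideanSpace ℝ (Fin k) → ℝ) (x : Fin k → ℝ) :
    Fin k → ℝ :=
  WithLp.equiv 2 (Fin k → ℝ) <| gradient f ((WithLp.equiv 2 (Fin k → ℝ)).symm x)

section

open scoped ComplexOrder

/-- The positive semidefinite square root of a positive semidefinite matrix (the definition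
`Matrix.PosSemidef.sqrt` of the older Mathlib, removed since). -/
noncomputable def Matrix.PosSemidef.sqrt {n : Type*} [Fintype n] [DecidableEq n] {𝕜 : Type*}
    [RCLike 𝕜] {A : Matrix n n 𝕜} (hA : A.PosSemidef) : Matrix n n 𝕜 :=
  hA.1.eigenvectorUnitary.1 * diagonal ((↑) ∘ (√·) ∘ hA.1.eigenvalues) *
  (star hA.1.eigenvectorUnitary : Matrix n n 𝕜)

end

/-!
At a critical point the first-order condition `λ W = -(1/n) ∑ᵢ ∇ℓᵢ(W hᵢ) hᵢᵀ` expresses `W`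
through the gradients. Substituting `W hᵢ` into the definition of `B` turns
`B = -(1/(nλ)) ∑ᵢ (W hᵢ) ∇ℓᵢ(W hᵢ)ᵀ` into `W (-(1/(nλ)) ∑ᵢ ∇ℓᵢ(W hᵢ) hᵢᵀ)ᵀ = W Wᵀ`.
Hence `B` is symmetric, `B Bᵀ = (W Wᵀ)²`, and `W Wᵀ`, being positive semidefinite, is the
square root of `B Bᵀ` by uniqueness of positive semidefinite square roots.
-/

namespace Matrix

variable {R ι m k : Type*}

theorem smul_sum_vecMulVec_mulVec [CommSemiring R] [Fintype ι] [Fintype k] (c : R)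
    (W : Matrix m k R) (u : ι → k → R) (g : ι → m → R) :
    c • ∑ i, vecMulVec (W *ᵥ u i) (g i) = W * (c • ∑ i, vecMulVec (g i) (u i))ᵀ := by
  simp only [transpose_smul, transpose_sum, transpose_vecMulVec, Matrix.mul_smul, Matrix.mul_sum,
    mul_vecMulVec]

variable [CommSemiring R] [Fintype m] [Fintype k] [DecidableEq m] [DecidableEq k]

theorem sum_sum_mul_single_one (W : Matrix m k R) (a : m) (b : k) :
    ∑ i, ∑ j, W i j * single a b (1 : R) i j = W a b := by
  simp [single_apply, ite_and]

theorem dotProduct_single_one_mulVec (v : m → R) (x : k → R) (a : m) (b : k) :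
    v ⬝ᵥ (single a b (1 : R) *ᵥ x) = v a * x b := by
  simp [single_mulVec, dotProduct, Function.update_apply]

end Matrix

namespace Matrix.PosSemidef

open scoped MatrixOrder ComplexOrder

variable {n 𝕜 : Type*} [Fintype n] [DecidableEq n] [RCLike 𝕜] {A : Matrix n n 𝕜}

theorem sqrt_eq_cfcSqrt (hA : A.PosSemidef) : hA.sqrt = CFC.sqrt A := by
  rw [CFC.sqrt_eq_cfc, cfc_nnreal_eq_real _ A, hA.1.cfc_eq]
  simp [IsHermitian.cfc, Matrix.PosSemidef.sqrt, Function.comp_def, Real.coe_toNNReal',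
    max_eq_left (hA.eigenvalues_nonneg _)]

theorem eq_sqrt_of_sq_eq {B : Matrix n n 𝕜} (hB : B.PosSemidef) (hA : A.PosSemidef)
    (h : B ^ 2 = A) : B = hA.sqrt := by
  rw [sqrt_eq_cfcSqrt, eq_comm]
  exact CFC.sqrt_unique (by rw [← h, sq]) hB.nonneg

end Matrix.PosSemidef

section Calculus

variable {ι κ : Type*} [Fintype ι] [Fintype κ]

noncomputable def mulVecCLM (x : κ → ℝ) : Matrix ι κ ℝ →L[ℝ] EuclideanSpace ℝ ι :=
  LinearMap.toContinuousLinearMap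
    { toFun V := WithLp.toLp 2 (V *ᵥ x)
      map_add' V V' := by simp [add_mulVec]
      map_smul' c V := by simp [smul_mulVec] }

theorem fderiv_toLp_apply_eq_grad_dotProduct {k : ℕ} (f : EuclideanSpace ℝ (Fin k) → ℝ)
    (x v : Fin k → ℝ) : fderiv ℝ f (WithLp.toLp 2 x) (WithLp.toLp 2 v) = grad f x ⬝ᵥ v := by
  rw [← inner_gradient_left, EuclideanSpace.inner_eq_star_dotProduct]
  simp [grad, dotProduct_comm]

variable {k : ℕ} {f : EuclideanSpace ℝ (Fin k) → ℝ} {W : Matrix (Fin k) κ ℝ} {x : κ → ℝ}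

theorem differentiableAt_comp_toLp_mulVec (hf : DifferentiableAt ℝ f (WithLp.toLp 2 (W *ᵥ x))) :
    DifferentiableAt ℝ (fun V : Matrix (Fin k) κ ℝ => f (WithLp.toLp 2 (V *ᵥ x))) W :=
  hf.comp W (mulVecCLM x).differentiableAt

theorem fderiv_comp_toLp_mulVec_apply (hf : DifferentiableAt ℝ f (WithLp.toLp 2 (W *ᵥ x)))
    (E : Matrix (Fin k) κ ℝ) :
    fderiv ℝ (fun V : Matrix (Fin k) κ ℝ => f (WithLp.toLp 2 (V *ᵥ x))) W E =
      grad f (W *ᵥ x) ⬝ᵥ (E *ᵥ x) := by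
  have hd : HasFDerivAt (fun V : Matrix (Fin k) κ ℝ => f (WithLp.toLp 2 (V *ᵥ x)))
      ((fderiv ℝ f _).comp (mulVecCLM x)) W :=
    hf.hasFDerivAt.comp W (mulVecCLM x).hasFDerivAt
  rw [hd.fderiv]
  exact fderiv_toLp_apply_eq_grad_dotProduct f _ _

theorem hasFDerivAt_sum_sq_entries (W : Matrix ι κ ℝ) :
    HasFDerivAt (fun V : Matrix ι κ ℝ => ∑ a, ∑ b, V a b ^ 2)
      (∑ a, ∑ b, (2 * W a b) • (entryLinearMap ℝ ℝ a b).toContinuousLinearMap) W :=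
  HasFDerivAt.fun_sum fun a _ => HasFDerivAt.fun_sum fun b _ =>
    ((entryLinearMap ℝ ℝ a b).toContinuousLinearMap.hasFDerivAt.pow 2).congr_fderiv (by simp; rfl)

end Calculus

section RegularizedLoss

variable {κ : Type*} [Fintype κ] {k n : ℕ}

noncomputable def regularizedLoss (lam : ℝ) (h : Fin n → κ → ℝ)
    (ℓ : Fin n → EuclideanSpace ℝ (Fin k) → ℝ) (V : Matrix (Fin k) κ ℝ) : ℝ :=
  (1 / n : ℝ) * ∑ i, ℓ i (WithLp.toLp 2 (V *ᵥ h i)) + (lam / 2) * ∑ a, ∑ b, V a b ^ 2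

variable {lam : ℝ} {h : Fin n → κ → ℝ} {ℓ : Fin n → EuclideanSpace ℝ (Fin k) → ℝ}
  {W : Matrix (Fin k) κ ℝ}

theorem fderiv_regularizedLoss_apply
    (hdiff : ∀ i, DifferentiableAt ℝ (ℓ i) (WithLp.toLp 2 (W *ᵥ h i))) (E : Matrix (Fin k) κ ℝ) :
    fderiv ℝ (regularizedLoss lam h ℓ) W E =
      (1 / n : ℝ) * ∑ i, grad (ℓ i) (W *ᵥ h i) ⬝ᵥ (E *ᵥ h i) + lam * ∑ a, ∑ b, W a b * E a b := by
  have hdata := HasFDerivAt.fun_sum fun i (_ : i ∈ Finset.univ) =>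
    (differentiableAt_comp_toLp_mulVec (hdiff i)).hasFDerivAt
  have hloss : HasFDerivAt (regularizedLoss lam h ℓ)
      ((1 / n : ℝ) • ∑ i, fderiv ℝ (fun V : Matrix (Fin k) κ ℝ => ℓ i (WithLp.toLp 2 (V *ᵥ h i))) W
        + (lam / 2) • ∑ a, ∑ b, (2 * W a b) • (entryLinearMap ℝ ℝ a b).toContinuousLinearMap) W :=
    (hdata.const_mul (1 / n : ℝ)).add ((hasFDerivAt_sum_sq_entries W).const_mul (lam / 2))
  rw [hloss.fderiv]
  simp only [_root_.add_apply, _root_.smul_apply, _root_.sum_apply,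
    fderiv_comp_toLp_mulVec_apply (hdiff _), LinearMap.coe_toContinuousLinearMap',
    entryLinearMap_apply, smul_eq_mul]
  congr 1
  simp only [Finset.mul_sum]
  exact Finset.sum_congr rfl fun a _ => Finset.sum_congr rfl fun b _ => by ring

theorem eq_smul_sum_vecMulVec_of_fderiv_regularizedLoss_eq_zero (hlam : lam ≠ 0)
    (hdiff : ∀ i, DifferentiableAt ℝ (ℓ i) (WithLp.toLp 2 (W *ᵥ h i)))
    (hcrit : fderiv ℝ (regularizedLoss lam h ℓ) W = 0) :
    W = (-(1 / (n * lam))) • ∑ i, vecMulVec (grad (ℓ i) (W *ᵥ h i)) (h i) := by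
  classical
  ext a b
  have hab := DFunLike.congr_fun hcrit (single a b 1)
  rw [fderiv_regularizedLoss_apply hdiff] at hab
  simp only [dotProduct_single_one_mulVec, sum_sum_mul_single_one, _root_.zero_apply] at hab
  simp only [Matrix.smul_apply, Matrix.sum_apply, vecMulVec_apply, smul_eq_mul]
  rw [← inv_mul_cancel_left₀ hlam (W a b), eq_neg_of_add_eq_zero_right hab]
  ring

end RegularizedLoss

theorem bfact_sqrt_symmetrization_general
    (n d d' : ℕ)
    (lam : ℝ) (hlam : 0 < lam)
    (h : Fin n → Fin d → ℝ)
    (ℓ : Fin n → EuclideanSpace ℝ (Fin d') → ℝ)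
    (hdiff : ∀ i, Differentiable ℝ (ℓ i))
    (W : Matrix (Fin d') (Fin d) ℝ)
    (B : Matrix (Fin d') (Fin d') ℝ)
    (hB : B = (-(1 / (n * lam))) •
      ∑ i, Matrix.vecMulVec (W.mulVec (h i)) (grad (ℓ i) (W.mulVec (h i))))
    (hcrit : fderiv ℝ
      (fun V : Matrix (Fin d') (Fin d) ℝ =>
        (1 / n : ℝ) * ∑ i, ℓ i ((WithLp.equiv 2 (Fin d' → ℝ)).symm (V.mulVec (h i)))
          + (lam / 2) * ∑ a : Fin d', ∑ b : Fin d, V a b ^ 2) W = 0) :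
    (W * Wᵀ) ^ 2 = B * Bᵀ ∧
      ∀ hp : (B * Bᵀ).PosSemidef, W * Wᵀ = hp.sqrt := by
  -- `hcrit` is `fderiv ℝ (regularizedLoss lam h ℓ) W = 0` up to unfolding.
  have hW : W = (-(1 / (n * lam))) • ∑ i, vecMulVec (grad (ℓ i) (W *ᵥ h i)) (h i) :=
    eq_smul_sum_vecMulVec_of_fderiv_regularizedLoss_eq_zero hlam.ne'
      (fun i => (hdiff i).differentiableAt) hcrit
  have hBW : B = W * Wᵀ := by
    rw [hB, smul_sum_vecMulVec_mulVec, ← hW]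
  have hsq : (W * Wᵀ) ^ 2 = B * Bᵀ := by
    rw [hBW, transpose_mul, transpose_transpose, sq]
  have hpsd : (W * Wᵀ).PosSemidef := by
    simpa using posSemidef_self_mul_conjTranspose W
  exact ⟨hsq, fun hp => hpsd.eq_sqrt_of_sq_eq hp hsq⟩

/-- **Square-root symmetrization of the backward FACT.** If `W` is a critical point of the
regularized loss, then `(W Wᵀ)² = B Bᵀ` where `B` is the bFACT matrix; consequently `W Wᵀ` is
the unique positive semidefinite square root of `B Bᵀ`, i.e. `W Wᵀ = √(B Bᵀ)`. -/
theorem bfact_sqrt_symmetrization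
    (n d d' : ℕ) (hn : 0 < n) (hd : 0 < d) (hd' : 0 < d')
    (lam : ℝ) (hlam : 0 < lam)
    (h : Fin n → Fin d → ℝ)
    (ℓ : Fin n → EuclideanSpace ℝ (Fin d') → ℝ)
    (hdiff : ∀ i, Differentiable ℝ (ℓ i))
    (W : Matrix (Fin d') (Fin d) ℝ)
    (B : Matrix (Fin d') (Fin d') ℝ)
    (hB : B = (-(1 / (n * lam))) •
      ∑ i, Matrix.vecMulVec (W.mulVec (h i)) (grad (ℓ i) (W.mulVec (h i))))
    (hcrit : fderiv ℝ
      (fun V : Matrix (Fin d') (Fin d) ℝ =>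
        (1 / n : ℝ) * ∑ i, ℓ i ((WithLp.equiv 2 (Fin d' → ℝ)).symm (V.mulVec (h i)))
          + (lam / 2) * ∑ a : Fin d', ∑ b : Fin d, V a b ^ 2) W = 0) :
    (W * Wᵀ) ^ 2 = B * Bᵀ ∧
      ∀ hp : (B * Bᵀ).PosSemidef, W * Wᵀ = hp.sqrt :=
  bfact_sqrt_symmetrization_general n d d' lam hlam h ℓ hdiff W B hB hcrit
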